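/- arXiv:2305.17536 — 3 statements merged into one kernel-verified Lean document; each statement's English description precedes it below -/
import Mathlib

section
/- For every pair of odd integers m and n with 12 ≤ m ≤ n, the lid-chromatic number of the Cartesian product of the cycles C_m and C_n satisfies χ_lid(C_m □ C_n) = 4. -/
open SimpleGraph

/-- The closed neighborhood of a vertex: the vertex together with its neighbors. -/
def SimpleGraph.closedNbhd {V : Type*} (G : SimpleGraph V) (v : V) : Set V :=
  insert v (G.neighborSet v)

/-- A coloring `f` is a locally identifying coloring of `G` if it is proper and, for every
edge `uw` whose endpoints have distinct closed neighborhoods, the sets of colors appearing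
on the two closed neighborhoods are distinct. -/
def SimpleGraph.IsLidColoring {V α : Type*} (G : SimpleGraph V) (f : V → α) : Prop :=
  (∀ ⦃u w⦄, G.Adj u w → f u ≠ f w) ∧
  (∀ ⦃u w⦄, G.Adj u w → G.closedNbhd u ≠ G.closedNbhd w →
    f '' G.closedNbhd u ≠ f '' G.closedNbhd w)

/-- `G` admits a locally identifying coloring with `k` colors. -/
def SimpleGraph.LidColorable {V : Type*} (G : SimpleGraph V) (k : ℕ) : Prop :=
  ∃ f : V → Fin k, G.IsLidColoring f

/-- The lid-chromatic number of `G`: the least number of colors in a lid-coloring of `G`. -/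
noncomputable def SimpleGraph.lidChromaticNumber {V : Type*} (G : SimpleGraph V) : ℕ∞ :=
  ⨅ k ∈ {k : ℕ | G.LidColorable k}, (k : ℕ∞)

/-- The tensor (categorical/Kronecker) product of two simple graphs. -/
def SimpleGraph.tensorProd {α β : Type*} (G : SimpleGraph α) (H : SimpleGraph β) :
    SimpleGraph (α × β) where
  Adj x y := G.Adj x.1 y.1 ∧ H.Adj x.2 y.2
  symm := ⟨fun _ _ h => ⟨h.1.symm, h.2.symm⟩⟩
  loopless := ⟨fun x h => G.loopless.irrefl x.1 h.1⟩

/-!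
Lower bound: with three colours, the palette of a closed neighbourhood contains the two distinct
colours of any edge at its centre, so it is either all colours or exactly those two. Adjacent
palettes must differ, hence exactly one endpoint of every edge sees all colours, and "the palette is
full" is a proper 2-colouring. This is impossible, as `C_m □ C_n` contains the odd cycle `C_m`.

Upper bound: an explicit lid-colouring of the torus `C_13 □ C_13` whose rows and columns 5, 6 agree
with rows and columns 7, 8 is pulled back along `C_m → C_13` in each factor, where `0, …, 5` are
fixed, the last six vertices go to `7, …, 12`, and the odd-length stretch `6, …, m - 7` in between
alternates `6, 7, …, 6`. After identifying 5 with 7 and 8 with 6 this map sends closed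
neighbourhoods onto closed neighbourhoods, so it preserves palettes.
-/

theorem Set.eq_pair_of_subset_of_ne_univ {α : Type*} [Finite α] (hα : Nat.card α = 3)
    {s : Set α} {a b : α} (hab : a ≠ b) (hs : {a, b} ⊆ s) (hs' : s ≠ Set.univ) : s = {a, b} := by
  refine (Set.eq_of_subset_of_ncard_le hs ?_).symm
  have := Set.ncard_lt_card hs'
  rw [Set.ncard_pair hab]
  omega

namespace SimpleGraph

section BoxProd

variable {α β γ δ α' β' : Type*} {G : SimpleGraph α} {H : SimpleGraph β}

theorem closedNbhd_boxProd (x : α × β) :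
    (G □ H).closedNbhd x = G.closedNbhd x.1 ×ˢ {x.2} ∪ {x.1} ×ˢ H.closedNbhd x.2 := by
  ext ⟨a, b⟩
  simp only [closedNbhd, neighborSet_boxProd, Set.mem_insert_iff, Set.mem_union, Set.mem_prod,
    Set.mem_singleton_iff, Prod.ext_iff]
  tauto

theorem image_prodMap_closedNbhd_boxProd (p : α → γ) (q : β → δ) (x : α × β) :
    Prod.map p q '' (G □ H).closedNbhd x =
      (p '' G.closedNbhd x.1) ×ˢ {q x.2} ∪ {p x.1} ×ˢ (q '' H.closedNbhd x.2) := by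
  rw [closedNbhd_boxProd, Set.image_union, Set.prodMap_image_prod, Set.prodMap_image_prod,
    Set.image_singleton, Set.image_singleton]

theorem image_image_prodMap_closedNbhd_boxProd {G' : SimpleGraph α'} {H' : SimpleGraph β'}
    {φ : α' → α} {ψ : β' → β} {p : α → γ} {q : β → δ}
    (hφ : ∀ a, (p ∘ φ) '' G'.closedNbhd a = p '' G.closedNbhd (φ a))
    (hψ : ∀ b, (q ∘ ψ) '' H'.closedNbhd b = q '' H.closedNbhd (ψ b)) (x : α' × β') :
    Prod.map p q '' (Prod.map φ ψ '' (G' □ H').closedNbhd x) =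
      Prod.map p q '' (G □ H).closedNbhd (Prod.map φ ψ x) := by
  rw [← Set.image_comp, Prod.map_comp_map, image_prodMap_closedNbhd_boxProd,
    image_prodMap_closedNbhd_boxProd, hφ, hψ]
  rfl

theorem closedNbhd_ne_of_boxProd_adj (hG : ∀ a, ∃ b, G.Adj a b) (hH : ∀ c, ∃ d, H.Adj c d)
    ⦃x y : α × β⦄ (hxy : (G □ H).Adj x y) : (G □ H).closedNbhd x ≠ (G □ H).closedNbhd y := by
  intro h
  rcases boxProd_adj.mp hxy with ⟨hadj, h2⟩ | ⟨hadj, h1⟩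
  · obtain ⟨d, hd⟩ := hH x.2
    have hmem : (x.1, d) ∈ (G □ H).closedNbhd x := Or.inr (boxProd_adj_right.mpr hd)
    rw [h] at hmem
    rcases hmem with h' | h'
    · exact hadj.ne (congrArg Prod.fst h' :)
    · rcases boxProd_adj.mp h' with ⟨-, h''⟩ | ⟨-, h''⟩
      · exact hd.ne (h2.trans h'')
      · exact hadj.ne h''.symm
  · obtain ⟨b, hb⟩ := hG x.1
    have hmem : (b, x.2) ∈ (G □ H).closedNbhd x := Or.inr (boxProd_adj_left.mpr hb)
    rw [h] at hmem
    rcases hmem with h' | h'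
    · exact hadj.ne (congrArg Prod.snd h' :)
    · rcases boxProd_adj.mp h' with ⟨-, h''⟩ | ⟨-, h''⟩
      · exact hadj.ne h''.symm
      · exact hb.ne (h1.trans h'')

def Hom.boxProdMap {G' : SimpleGraph α'} {H' : SimpleGraph β'} (φ : G' →g G) (ψ : H' →g H) :
    (G' □ H') →g (G □ H) where
  toFun := Prod.map φ ψ
  map_rel' := by
    rintro x y (⟨h, e⟩ | ⟨h, e⟩)
    · exact Or.inl ⟨φ.map_adj h, congrArg ψ e⟩
    · exact Or.inr ⟨ψ.map_adj h, congrArg φ e⟩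

end BoxProd

section CycleGraph

variable {n : ℕ}

theorem cycleGraph_adj_iff_eq_add_one {u v : Fin (n + 2)} :
    (cycleGraph (n + 2)).Adj u v ↔ v = u + 1 ∨ u = v + 1 := by
  rw [cycleGraph_adj, sub_eq_iff_eq_add', sub_eq_iff_eq_add', eq_comm, or_comm]

theorem cycleGraph_adj_add_one (u : Fin (n + 2)) : (cycleGraph (n + 2)).Adj u (u + 1) :=
  cycleGraph_adj_iff_eq_add_one.mpr (Or.inl rfl)

theorem cycleGraph_exists_adj (u : Fin (n + 2)) : ∃ v, (cycleGraph (n + 2)).Adj u v :=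
  ⟨u + 1, cycleGraph_adj_add_one u⟩

theorem cycleGraph_closedNbhd (v : Fin (n + 2)) :
    (cycleGraph (n + 2)).closedNbhd v = {v, v - 1, v + 1} := by
  rw [closedNbhd, cycleGraph_neighborSet]

theorem not_colorable_two_cycleGraph (hn : Odd n) (h2 : 2 ≤ n) : ¬ (cycleGraph n).Colorable 2 := by
  intro h
  have h3 := h.chromaticNumber_le
  rw [chromaticNumber_cycleGraph_of_odd n h2 hn] at h3
  norm_num at h3

theorem boxProd_cycleGraph_adj_rec {m : ℕ}
    {P : Fin (m + 2) × Fin (n + 2) → Fin (m + 2) × Fin (n + 2) → Prop}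
    (hP : ∀ ⦃u w⦄, P u w → P w u) (hfst : ∀ a b, P (a, b) (a + 1, b))
    (hsnd : ∀ a b, P (a, b) (a, b + 1)) ⦃u w⦄
    (huw : (cycleGraph (m + 2) □ cycleGraph (n + 2)).Adj u w) : P u w := by
  obtain ⟨a, b⟩ := u
  obtain ⟨c, d⟩ := w
  rcases boxProd_adj.mp huw with ⟨h, e⟩ | ⟨h, e⟩
  · obtain rfl : b = d := e
    rcases cycleGraph_adj_iff_eq_add_one.mp h with rfl | rfl
    · exact hfst a b
    · exact hP (hfst c b)
  · obtain rfl : a = c := e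
    rcases cycleGraph_adj_iff_eq_add_one.mp h with rfl | rfl
    · exact hsnd a b
    · exact hP (hsnd a d)

end CycleGraph

section LidColoring

variable {V W α : Type*} {G : SimpleGraph V}

theorem LidColorable.mono {k l : ℕ} (h : G.LidColorable k) (hkl : k ≤ l) : G.LidColorable l := by
  obtain ⟨f, hproper, hlid⟩ := h
  have hinj := Fin.castLE_injective hkl
  refine ⟨Fin.castLE hkl ∘ f, fun u w huw => hinj.ne (hproper huw), fun u w huw hN => ?_⟩
  rw [Set.image_comp, Set.image_comp]
  exact (Set.image_injective.mpr hinj).ne (hlid huw hN)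

theorem lidChromaticNumber_eq_succ {k : ℕ} (h : G.LidColorable (k + 1))
    (h' : ¬ G.LidColorable k) : G.lidChromaticNumber = k + 1 := by
  refine le_antisymm (by exact_mod_cast iInf₂_le (k + 1) h) (le_iInf₂ fun l hl => ?_)
  have hkl : k < l := lt_of_not_ge fun hlk => h' (hl.mono hlk)
  exact_mod_cast hkl

theorem IsLidColoring.comp {G' : SimpleGraph W} {f : V → α} (hf : G.IsLidColoring f)
    (hG : ∀ ⦃u w⦄, G.Adj u w → G.closedNbhd u ≠ G.closedNbhd w) (φ : G' →g G)
    (hφ : ∀ v, f '' (φ '' G'.closedNbhd v) = f '' G.closedNbhd (φ v)) :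
    G'.IsLidColoring (f ∘ φ) := by
  refine ⟨fun u w huw => hf.1 (φ.map_adj huw), fun u w huw _ => ?_⟩
  rw [Set.image_comp, Set.image_comp, hφ, hφ]
  exact hf.2 (φ.map_adj huw) (hG (φ.map_adj huw))

theorem IsLidColoring.colorable_two [Finite α] (hα : Nat.card α = 3) {f : V → α}
    (hf : G.IsLidColoring f) (hG : ∀ ⦃u w⦄, G.Adj u w → G.closedNbhd u ≠ G.closedNbhd w) :
    G.Colorable 2 := by
  refine Fintype.card_prop ▸ (Coloring.mk (fun v => f '' G.closedNbhd v = Set.univ) ?_).colorable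
  intro u w huw hfull
  have hne := hf.2 huw (hG huw)
  have hsub : {f u, f w} ⊆ f '' G.closedNbhd u ∧ {f u, f w} ⊆ f '' G.closedNbhd w := by
    simp only [Set.insert_subset_iff, Set.singleton_subset_iff]
    exact ⟨⟨Set.mem_image_of_mem f (Set.mem_insert u _), Set.mem_image_of_mem f (Or.inr huw)⟩,
      Set.mem_image_of_mem f (Or.inr huw.symm), Set.mem_image_of_mem f (Set.mem_insert w _)⟩
  by_cases hu : f '' G.closedNbhd u = Set.univ
  · exact hne (hu.trans (hfull ▸ hu).symm)
  · have hw : f '' G.closedNbhd w ≠ Set.univ := fun h => hu (hfull ▸ h)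
    exact hne ((Set.eq_pair_of_subset_of_ne_univ hα (hf.1 huw) hsub.1 hu).trans
      (Set.eq_pair_of_subset_of_ne_univ hα (hf.1 huw) hsub.2 hw).symm)

theorem not_lidColorable_three_boxProd {β : Type*} [Nonempty β] {H : SimpleGraph β}
    (hG : ∀ a, ∃ b, G.Adj a b) (hH : ∀ c, ∃ d, H.Adj c d) (hG₂ : ¬ G.Colorable 2) :
    ¬ (G □ H).LidColorable 3 := by
  rintro ⟨f, hf⟩
  have hGH := hf.colorable_two (by simp) (closedNbhd_ne_of_boxProd_adj hG hH)
  exact hG₂ (hGH.of_hom (boxProdLeft G H (Classical.arbitrary β)).toHom)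

end LidColoring

end SimpleGraph

def torusTable : Fin 13 → Fin 13 → Fin 4 :=
  ![![0,3,1,3,2,3,1,3,1,2,0,3,2],
    ![1,0,3,0,3,1,2,1,2,1,2,0,3],
    ![3,2,0,2,0,2,0,2,0,2,3,2,1],
    ![0,3,1,0,2,0,3,0,3,0,2,1,3],
    ![3,0,3,2,0,1,0,1,0,3,0,3,2],
    ![1,2,0,3,1,0,2,0,2,0,3,1,3],
    ![2,1,3,2,3,1,3,1,3,1,0,2,0],
    ![1,2,0,3,1,0,2,0,2,0,3,1,3],
    ![2,1,3,2,3,1,3,1,3,1,0,2,0],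
    ![1,3,0,1,0,3,2,3,2,0,3,1,3],
    ![3,2,1,2,3,2,3,2,3,1,0,3,0],
    ![2,3,0,1,2,3,0,3,0,3,2,0,3],
    ![3,0,3,2,3,0,3,0,3,1,3,1,0]]

def torusColoring (x : Fin 13 × Fin 13) : Fin 4 := torusTable x.1 x.2

def torusPalette (a b : Fin 13) : Finset (Fin 4) :=
  {torusTable a b, torusTable (a - 1) b, torusTable (a + 1) b, torusTable a (b - 1),
    torusTable a (b + 1)}

theorem torusTable_separates_neighbors : ∀ a b : Fin 13,
    torusTable a b ≠ torusTable (a + 1) b ∧ torusTable a b ≠ torusTable a (b + 1) ∧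
    torusPalette a b ≠ torusPalette (a + 1) b ∧ torusPalette a b ≠ torusPalette a (b + 1) := by
  decide

theorem image_torusColoring_closedNbhd (a b : Fin 13) :
    torusColoring '' (cycleGraph 13 □ cycleGraph 13).closedNbhd (a, b) = torusPalette a b := by
  rw [closedNbhd_boxProd, cycleGraph_closedNbhd, cycleGraph_closedNbhd]
  ext c
  simp only [torusColoring, torusPalette, Finset.coe_insert, Finset.coe_singleton, Set.mem_image,
    Set.mem_union, Set.mem_prod, Set.mem_insert_iff, Set.mem_singleton_iff, Prod.exists, eq_comm,
    or_and_right, exists_or, ↓existsAndEq, and_true, exists_eq_left', exists_eq_left, true_and]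
  tauto

theorem torusColoring_isLidColoring :
    (cycleGraph 13 □ cycleGraph 13).IsLidColoring torusColoring := by
  have key : ∀ ⦃u w⦄, (cycleGraph 13 □ cycleGraph 13).Adj u w →
      torusColoring u ≠ torusColoring w ∧
        torusColoring '' (cycleGraph 13 □ cycleGraph 13).closedNbhd u ≠
          torusColoring '' (cycleGraph 13 □ cycleGraph 13).closedNbhd w := by
    refine boxProd_cycleGraph_adj_rec (fun u w h => ⟨h.1.symm, h.2.symm⟩) (fun a b => ?_)
      (fun a b => ?_) <;>
    rw [image_torusColoring_closedNbhd, image_torusColoring_closedNbhd]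
    · have h := torusTable_separates_neighbors a b
      exact ⟨h.1, Finset.coe_injective.ne h.2.2.1⟩
    · have h := torusTable_separates_neighbors a b
      exact ⟨h.2.1, Finset.coe_injective.ne h.2.2.2⟩
  exact ⟨fun u w h => (key h).1, fun u w h _ => (key h).2⟩

def bandCollapse (x : Fin 13) : Fin 13 := if x = 5 then 7 else if x = 8 then 6 else x

theorem torusColoring_comp_bandCollapse :
    torusColoring ∘ Prod.map bandCollapse bandCollapse = torusColoring := by
  have h : ∀ a b : Fin 13, torusTable (bandCollapse a) (bandCollapse b) = torusTable a b := by
    decide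
  exact funext fun x => h x.1 x.2

/-- For `13 ≤ m` all values are below 13, so `Fin.ofNat` does not wrap around. -/
def bandFold (m : ℕ) (i : Fin m) : Fin 13 :=
  Fin.ofNat 13
    (if i.val ≤ 5 then i.val else if m - 6 ≤ i.val then i.val + 13 - m else 6 + i.val % 2)

theorem bandFold_add_one {M : ℕ} (hM : 13 ≤ M + 2) (hodd : Odd (M + 2)) (i : Fin (M + 2)) :
    bandFold (M + 2) (i + 1) = bandFold (M + 2) i + 1 ∨
      bandFold (M + 2) i = 7 ∧ bandFold (M + 2) (i + 1) = 6 := by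
  obtain ⟨k, hk⟩ := hodd
  have hi := i.isLt
  have hsucc := Fin.val_add_one i
  simp only [Fin.ext_iff, Fin.val_last] at hsucc
  generalize i + 1 = j at hsucc ⊢
  simp only [Fin.ext_iff, bandFold, Fin.val_ofNat, Fin.val_add, Fin.val_one]
  generalize j.val = j at *
  generalize i.val = i at *
  subst hsucc
  split_ifs <;> omega

def bandFoldHom {M : ℕ} (hM : 13 ≤ M + 2) (hodd : Odd (M + 2)) :
    cycleGraph (M + 2) →g cycleGraph 13 where
  toFun := bandFold (M + 2)
  map_rel' := by
    have key : ∀ i, (cycleGraph 13).Adj (bandFold (M + 2) i) (bandFold (M + 2) (i + 1)) := by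
      intro i
      rcases bandFold_add_one hM hodd i with h | ⟨h7, h6⟩
      · rw [h]
        exact cycleGraph_adj_add_one _
      · rw [h7, h6]
        decide
    intro u v huv
    rcases cycleGraph_adj_iff_eq_add_one.mp huv with rfl | rfl
    · exact key u
    · exact (key v).symm

theorem image_bandFold_closedNbhd {M : ℕ} (hM : 13 ≤ M + 2) (hodd : Odd (M + 2))
    (i : Fin (M + 2)) :
    (bandCollapse ∘ bandFold (M + 2)) '' (cycleGraph (M + 2)).closedNbhd i =
      bandCollapse '' (cycleGraph 13).closedNbhd (bandFold (M + 2) i) := by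
  have hprev := bandFold_add_one hM hodd (i - 1)
  have hnext := bandFold_add_one hM hodd i
  rw [sub_add_cancel] at hprev
  rw [cycleGraph_closedNbhd, cycleGraph_closedNbhd, Set.image_insert_eq, Set.image_insert_eq,
    Set.image_singleton, Set.image_insert_eq, Set.image_insert_eq, Set.image_singleton]
  simp only [Function.comp]
  generalize bandFold (M + 2) (i - 1) = a at hprev ⊢
  generalize bandFold (M + 2) (i + 1) = b at hnext ⊢
  generalize bandFold (M + 2) i = x at hprev hnext ⊢
  rcases hprev with rfl | ⟨rfl, rfl⟩ <;> rcases hnext with rfl | ⟨h, rfl⟩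
  · rw [add_sub_cancel_right]
  · obtain rfl : a = 6 := eq_sub_of_add_eq h
    ext y
    simp only [Set.mem_insert_iff, Set.mem_singleton_iff]
    revert y
    decide
  · ext y
    simp only [Set.mem_insert_iff, Set.mem_singleton_iff]
    revert y
    decide
  · exact absurd h (by decide)

theorem lidColorable_four_cycleGraph_boxProd {M N : ℕ} (hM : 13 ≤ M + 2) (hN : 13 ≤ N + 2)
    (hoddM : Odd (M + 2)) (hoddN : Odd (N + 2)) :
    (cycleGraph (M + 2) □ cycleGraph (N + 2)).LidColorable 4 := by
  refine ⟨_, torusColoring_isLidColoring.comp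
    (closedNbhd_ne_of_boxProd_adj cycleGraph_exists_adj cycleGraph_exists_adj)
    ((bandFoldHom hM hoddM).boxProdMap (bandFoldHom hN hoddN)) fun v => ?_⟩
  rw [← torusColoring_comp_bandCollapse, Set.image_comp, Set.image_comp]
  exact congrArg _ (image_image_prodMap_closedNbhd_boxProd (image_bandFold_closedNbhd hM hoddM)
    (image_bandFold_closedNbhd hN hoddN) v)

/-- For odd `m`, `n` with `12 ≤ m ≤ n`, `χ_lid(C_m □ C_n) = 4`. -/
theorem lid_stmt_8 (m n : ℕ) (hm : Odd m) (hn : Odd n) (h12 : 12 ≤ m) (hmn : m ≤ n) :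
    (cycleGraph m □ cycleGraph n).lidChromaticNumber = 4 := by
  obtain ⟨M, rfl⟩ : ∃ M, m = M + 2 := ⟨m - 2, by omega⟩
  obtain ⟨N, rfl⟩ : ∃ N, n = N + 2 := ⟨n - 2, by omega⟩
  have hM : 13 ≤ M + 2 := by
    obtain ⟨k, hk⟩ := hm
    omega
  exact_mod_cast lidChromaticNumber_eq_succ (k := 3)
    (lidColorable_four_cycleGraph_boxProd hM (by omega) hm hn)
    (not_lidColorable_three_boxProd cycleGraph_exists_adj cycleGraph_exists_adj
      (not_colorable_two_cycleGraph hm (by omega)))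
end

section
/- Let G and H be connected simple graphs, each with at least two vertices, such that at least one of G and H has at least three vertices. Then χ_lid(G × H) ≤ χ(G)·χ(H), where χ denotes the chromatic number. -/
/-!
Colour `(u, v) ∈ G × H` by `(f u, γ v)`, where `f` is a proper colouring of `G` and
`γ : V(H) → Fin l` is any map, not necessarily proper. The colouring is proper because `f` is.
If two adjacent vertices `(u₁, v₁), (u₂, v₂)` had the same colour sets on their closed
neighbourhoods, then every neighbour of `v₂` would get the `γ`-colour of `v₁` and vice versa:
the edge `v₁v₂` would be *weakly bad*. It remains to find a `γ` with no weakly bad edge. Fix a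
root `r` none of whose neighbours is a leaf hanging on `r` (this needs three vertices) and colour
by the distance `d` to `r`: if `H` is not bipartite then `l ≥ 3` and `d mod 3` works; if it is,
edges always join consecutive levels and the pattern `0, 1, 1, 0` of `d mod 4` works. In either
case the parent of one endpoint of an edge sees a colour different from the other endpoint.
-/

open SimpleGraph

open Set

namespace SimpleGraph

variable {V W A B : Type*} {G : SimpleGraph V} {H : SimpleGraph W}

theorem Iso.image_closedNbhd {G' : SimpleGraph W} (e : G ≃g G') (v : V) :
    e '' G.closedNbhd v = G'.closedNbhd (e v) := by
  ext w
  obtain ⟨w, rfl⟩ := e.surjective w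
  simp [closedNbhd, e.injective.mem_set_image, e.map_adj_iff]

theorem IsLidColoring.comp_iso {G' : SimpleGraph W} {f : W → A} (hf : G'.IsLidColoring f)
    (e : G ≃g G') : G.IsLidColoring (f ∘ e) := by
  refine ⟨fun u w h => hf.1 (e.map_adj_iff.2 h), fun u w h hN => ?_⟩
  rw [image_comp, image_comp, e.image_closedNbhd, e.image_closedNbhd]
  refine hf.2 (e.map_adj_iff.2 h) fun hN' => hN (e.injective.image_injective ?_)
  rwa [e.image_closedNbhd, e.image_closedNbhd]

theorem IsLidColoring.comp_injective {f : V → A} (hf : G.IsLidColoring f) {e : A → B}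
    (he : Function.Injective e) : G.IsLidColoring (e ∘ f) := by
  refine ⟨fun u w h => he.ne (hf.1 h), fun u w h hN => ?_⟩
  rw [image_comp, image_comp]
  exact he.image_injective.ne (hf.2 h hN)

theorem IsLidColoring.lidColorable [Fintype A] {f : V → A} (hf : G.IsLidColoring f) :
    G.LidColorable (Fintype.card A) :=
  ⟨_, hf.comp_injective (Fintype.equivFin A).injective⟩

theorem lidChromaticNumber_le {k : ℕ} (h : G.LidColorable k) : G.lidChromaticNumber ≤ k :=
  iInf₂_le k h

def tensorProdComm (G : SimpleGraph V) (H : SimpleGraph W) :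
    G.tensorProd H ≃g H.tensorProd G :=
  ⟨Equiv.prodComm V W, and_comm⟩

/-- An edge `vw` is weakly bad for `γ` when all neighbours of `v` have colour `γ w` and all
neighbours of `w` have colour `γ v`; this is the negation. -/
def HasNoWeaklyBadEdge (H : SimpleGraph W) (γ : W → B) : Prop :=
  ∀ ⦃v w⦄, H.Adj v w → (∃ z, H.Adj v z ∧ γ z ≠ γ w) ∨ ∃ z, H.Adj w z ∧ γ z ≠ γ v

theorem eq_of_image_closedNbhd_tensorProd_eq (f : G.Coloring A) (γ : W → B) {u₁ u₂ : V}
    {w₁ w₂ z : W} (hu : G.Adj u₁ u₂) (hz : H.Adj w₂ z)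
    (heq : (fun x => (f x.1, γ x.2)) '' (G.tensorProd H).closedNbhd (u₁, w₁) =
      (fun x => (f x.1, γ x.2)) '' (G.tensorProd H).closedNbhd (u₂, w₂)) :
    γ z = γ w₁ := by
  have hmem : (f u₁, γ z) ∈ (fun x => (f x.1, γ x.2)) '' (G.tensorProd H).closedNbhd (u₁, w₁) :=
    heq ▸ ⟨(u₁, z), Or.inr ⟨hu.symm, hz⟩, rfl⟩
  obtain ⟨⟨u, w⟩, hx | hx, hc⟩ := hmem
  · cases hx
    exact (Prod.ext_iff.1 hc).2.symm
  · exact absurd (Prod.ext_iff.1 hc).1.symm (f.valid hx.1)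

theorem isLidColoring_tensorProd (f : G.Coloring A) {γ : W → B} (hγ : H.HasNoWeaklyBadEdge γ) :
    (G.tensorProd H).IsLidColoring fun x => (f x.1, γ x.2) := by
  refine ⟨fun x y h hc => f.valid h.1 (Prod.ext_iff.1 hc).1, ?_⟩
  rintro ⟨u₁, w₁⟩ ⟨u₂, w₂⟩ ⟨hu, hw⟩ - heq
  rcases hγ hw with ⟨z, hz, hne⟩ | ⟨z, hz, hne⟩
  · exact hne (eq_of_image_closedNbhd_tensorProd_eq f γ hu.symm hz heq.symm)
  · exact hne (eq_of_image_closedNbhd_tensorProd_eq f γ hu hz heq)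

theorem Connected.exists_adj_dist_add_one_eq (hG : G.Connected) {r v : V} (h : r ≠ v) :
    ∃ p, G.Adj v p ∧ G.dist r p + 1 = G.dist r v := by
  obtain ⟨q, hq⟩ := (hG v r).exists_walk_length_eq_dist
  have hnil := q.not_nil_of_ne h.symm
  refine ⟨q.snd, q.adj_snd hnil, ?_⟩
  have hle : G.dist q.snd r ≤ q.tail.length := dist_le _
  have hlen := Walk.length_tail_add_one hnil
  have hr : G.dist r v ≠ 0 := fun h0 => h (hG.dist_eq_zero_iff.1 h0)
  rw [dist_comm] at hle hq
  rcases (q.adj_snd hnil).diff_dist_adj (u := r) with h' | h' | h' <;> omega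

theorem Colorable.dist_ne_of_adj (h2 : G.Colorable 2) {r v w : V} (hv : G.Reachable r v)
    (hvw : G.Adj v w) : G.dist r v ≠ G.dist r w := by
  intro heq
  obtain ⟨p, hp⟩ := hv.exists_walk_length_eq_dist
  obtain ⟨q, hq⟩ := (hv.trans hvw.reachable).exists_walk_length_eq_dist
  have := two_colorable_iff_forall_loop_even.1 h2 r ((p.concat hvw).append q.reverse)
  rw [Walk.length_append, Walk.length_concat, Walk.length_reverse, hp, hq, ← heq] at this
  exact Nat.not_even_two_mul_add_one _ (by rwa [two_mul, add_right_comm])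

theorem Walk.mem_of_forall_adj_mem {S : Set V} (hS : ∀ ⦃u v⦄, u ∈ S → G.Adj u v → v ∈ S)
    {x y : V} (p : G.Walk x y) (hx : x ∈ S) : y ∈ S := by
  induction p with
  | nil => exact hx
  | cons h _ ih => exact ih (hS hx h)

theorem Connected.exists_forall_adj_exists_adj_ne (hG : G.Connected)
    (h3 : ∃ a b c : V, a ≠ b ∧ a ≠ c ∧ b ≠ c) :
    ∃ r, ∀ y, G.Adj r y → ∃ z, G.Adj y z ∧ z ≠ r := by
  obtain ⟨a, b, c, hab, hac, hbc⟩ := h3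
  by_contra! hbad
  obtain ⟨y, hay, hy⟩ := hbad a
  obtain ⟨a', hya', ha'⟩ := hbad y
  obtain rfl : a' = a := hy a' hya'
  have hclosed : ∀ ⦃u v⦄, u ∈ ({a', y} : Set V) → G.Adj u v → v ∈ ({a', y} : Set V) := by
    rintro u v (rfl | rfl) huv
    · exact Or.inr (ha' v huv)
    · exact Or.inl (hy v huv)
  have hall (v : V) : v ∈ ({a', y} : Set V) :=
    (hG a' v).some.mem_of_forall_adj_mem hclosed (Or.inl rfl)
  have hb := hall b
  have hc := hall c
  simp only [mem_insert_iff, mem_singleton_iff] at hb hc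
  grind

theorem hasNoWeaklyBadEdge_comp_dist (hG : G.Connected) {r : V}
    (hr : ∀ y, G.Adj r y → ∃ z, G.Adj y z ∧ z ≠ r) {p : ℕ → B} (hp2 : ∀ n, p n ≠ p (n + 2))
    (hp01 : p 0 ≠ p 1)
    (hlevel : (∀ n, p n ≠ p (n + 1)) ∨ ∀ ⦃v w⦄, G.Adj v w → G.dist r v ≠ G.dist r w) :
    G.HasNoWeaklyBadEdge (p ∘ G.dist r) := by
  intro v w hvw
  wlog hle : G.dist r v ≤ G.dist r w generalizing v w
  · exact (this hvw.symm (by omega)).symm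
  by_cases hv : r = v
  · subst hv
    obtain ⟨z, hwz, hzr⟩ := hr w hvw
    refine Or.inr ⟨z, hwz, ?_⟩
    have hz0 : G.dist r z ≠ 0 := fun h0 => hzr (hG.dist_eq_zero_iff.1 h0).symm
    have hw1 : G.dist r w = 1 := dist_eq_one_iff_adj.2 hvw
    simp only [Function.comp_apply, dist_self]
    rcases hwz.diff_dist_adj (u := r) with h | h | h <;> rw [h, hw1]
    exacts [hp01.symm, (hp2 0).symm, by omega]
  · obtain ⟨q, hvq, hq⟩ := hG.exists_adj_dist_add_one_eq hv
    refine Or.inl ⟨q, hvq, ?_⟩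
    simp only [Function.comp_apply]
    rcases hvw.diff_dist_adj (u := r) with h | h | h
    · rcases hlevel with hp1 | hlevel
      · rw [h, ← hq]; exact hp1 _
      · exact absurd h.symm (hlevel hvw)
    · rw [h, ← hq]; exact hp2 _
    · omega

theorem Connected.exists_hasNoWeaklyBadEdge (hG : G.Connected)
    (h3 : ∃ a b c : V, a ≠ b ∧ a ≠ c ∧ b ≠ c) {k : ℕ} (hk : G.Colorable k) :
    ∃ γ : V → Fin k, G.HasNoWeaklyBadEdge γ := by
  obtain ⟨r, hr⟩ := hG.exists_forall_adj_exists_adj_ne h3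
  have : Nontrivial V := by
    obtain ⟨a, b, -, hab, -⟩ := h3
    exact ⟨a, b, hab⟩
  obtain ⟨v, hrv⟩ := hG.preconnected.exists_adj_of_nontrivial r
  have hk2 : 2 ≤ k := by
    exact_mod_cast (two_le_chromaticNumber_of_adj hrv).trans hk.chromaticNumber_le
  by_cases h2 : G.Colorable 2
  · -- `(n + 1) / 2 % 2` runs through `0, 1, 1, 0` periodically
    refine ⟨_, hasNoWeaklyBadEdge_comp_dist hG hr (p := fun n => ⟨(n + 1) / 2 % 2, by omega⟩)
      ?_ ?_ (Or.inr fun v w h => h2.dist_ne_of_adj (hG r v) h)⟩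
    · intro n; simp only [ne_eq, Fin.ext_iff]; omega
    · simp
  · have hk3 : 3 ≤ k := by
      by_contra
      exact h2 (hk.mono (by omega))
    refine ⟨_, hasNoWeaklyBadEdge_comp_dist hG hr (p := fun n => ⟨n % 3, by omega⟩) ?_ ?_ ?_⟩
    · intro n; simp only [ne_eq, Fin.ext_iff]; omega
    · simp
    · left; intro n; simp only [ne_eq, Fin.ext_iff]; omega

theorem lidColorable_tensorProd_of_connected_right {k l : ℕ} (hk : G.Colorable k)
    (hH : H.Connected) (h3 : ∃ a b c : W, a ≠ b ∧ a ≠ c ∧ b ≠ c) (hl : H.Colorable l) :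
    (G.tensorProd H).LidColorable (k * l) := by
  obtain ⟨f⟩ := hk
  obtain ⟨γ, hγ⟩ := hH.exists_hasNoWeaklyBadEdge h3 hl
  simpa using (isLidColoring_tensorProd f hγ).lidColorable

theorem lidColorable_tensorProd_of_connected_left {k l : ℕ} (hG : G.Connected)
    (h3 : ∃ a b c : V, a ≠ b ∧ a ≠ c ∧ b ≠ c) (hk : G.Colorable k) (hl : H.Colorable l) :
    (G.tensorProd H).LidColorable (k * l) := by
  obtain ⟨g⟩ := hl
  obtain ⟨γ, hγ⟩ := hG.exists_hasNoWeaklyBadEdge h3 hk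
  have := (isLidColoring_tensorProd g hγ).comp_iso (tensorProdComm G H)
  simpa [mul_comm] using this.lidColorable

end SimpleGraph

/-- For connected graphs `G` and `H` with at least two vertices each, one of which has at
least three vertices, `χ_lid(G × H) ≤ χ(G) · χ(H)`. -/
theorem lid_stmt_13 {α β : Type*} [Nontrivial α] [Nontrivial β]
    (G : SimpleGraph α) (H : SimpleGraph β) (hG : G.Connected) (hH : H.Connected)
    (h3 : (∃ a b c : α, a ≠ b ∧ a ≠ c ∧ b ≠ c) ∨ (∃ a b c : β, a ≠ b ∧ a ≠ c ∧ b ≠ c)) :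
    (G.tensorProd H).lidChromaticNumber ≤ G.chromaticNumber * H.chromaticNumber := by
  by_cases hfin : G.chromaticNumber ≠ ⊤ ∧ H.chromaticNumber ≠ ⊤
  · obtain ⟨hGfin, hHfin⟩ := hfin
    have hk := colorable_of_chromaticNumber_ne_top hGfin
    have hl := colorable_of_chromaticNumber_ne_top hHfin
    rw [← ENat.natCast_toNat hGfin, ← ENat.natCast_toNat hHfin, ← Nat.cast_mul]
    apply lidChromaticNumber_le
    rcases h3 with hα | hβ
    · exact lidColorable_tensorProd_of_connected_left hG hα hk hl
    · exact lidColorable_tensorProd_of_connected_right hk hH hβ hl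
  · have hG0 : G.chromaticNumber ≠ 0 := by simp
    have hH0 : H.chromaticNumber ≠ 0 := by simp
    rw [not_and_or, not_ne_iff, not_ne_iff] at hfin
    rcases hfin with h | h <;> simp [h, hG0, hH0]
end

section
/- Let m and n be integers with 3 ≤ m ≤ n such that at least one of m and n is even. Then the lid-chromatic number of the tensor product of the cycles C_m and C_n satisfies χ_lid(C_m × C_n) = 3. -/
open SimpleGraph

/-!
Split `C_m × C_n` by the parity of an even factor; colour one side `0` and the other `1` or `2`.
A vertex on the second side sees only `0` around it, so the lid condition holds as soon as every
vertex on the `0` side sees both `1` and `2` among its neighbours. Both cycles admit colourings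
`ρ, κ` into `Fin 3` that differ on the two neighbours of every vertex, and among the four
neighbours `(i ± 1, j ± 1)` of `(i, j)` pigeonhole gives a row on which `[ρ i' = κ j']` takes both
values. Two colours never suffice: in a bipartite graph a vertex `u` with two neighbours `v, w`
has `w ∈ N[u] \ N[v]`, and with two colours both `N[u]` and `N[v]` carry every colour.
-/

namespace SimpleGraph

variable {V : Type*} {G : SimpleGraph V}

def NonconstantOnNeighborSets {α : Type*} (G : SimpleGraph V) (c : V → α) : Prop :=
  ∀ v, ∃ x y, G.Adj v x ∧ G.Adj v y ∧ c x ≠ c y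

lemma self_mem_closedNbhd (u : V) : u ∈ G.closedNbhd u :=
  Set.mem_insert _ _

lemma mem_closedNbhd_of_adj {u v : V} (h : G.Adj u v) : v ∈ G.closedNbhd u :=
  Set.mem_insert_of_mem _ h

lemma Coloring.eq_not_of_adj (p : G.Coloring Bool) {u v : V} (h : G.Adj u v) : p v = !p u :=
  Bool.eq_not_iff.2 (p.valid h).symm

lemma lidChromaticNumber_eq_of_forall_le {k : ℕ} (hk : G.LidColorable k)
    (hmin : ∀ j, G.LidColorable j → k ≤ j) : G.lidChromaticNumber = k :=
  le_antisymm (iInf₂_le k hk) (le_iInf₂ fun j hj => by exact_mod_cast hmin j hj)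

lemma three_le_of_lidColorable_of_closedNbhd_ne {u v : V} (huv : G.Adj u v)
    (hN : G.closedNbhd u ≠ G.closedNbhd v) {k : ℕ} (hk : G.LidColorable k) : 3 ≤ k := by
  obtain ⟨f, hproper, hlid⟩ := hk
  by_contra! hk3
  have hfuv := hproper huv
  have hall : ∀ c : Fin k, c = f u ∨ c = f v := fun c => by omega
  have himage : ∀ x, u ∈ G.closedNbhd x → v ∈ G.closedNbhd x → f '' G.closedNbhd x = .univ :=
    fun x hu hv => Set.eq_univ_of_forall fun c =>
      (hall c).elim (fun h => ⟨u, hu, h.symm⟩) (fun h => ⟨v, hv, h.symm⟩)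
  refine hlid huv hN ?_
  rw [himage u (self_mem_closedNbhd u) (mem_closedNbhd_of_adj huv),
    himage v (mem_closedNbhd_of_adj huv.symm) (self_mem_closedNbhd v)]

lemma three_le_of_lidColorable_of_bipartite (p : G.Coloring Bool) {u v w : V} (huv : G.Adj u v)
    (huw : G.Adj u w) (hvw : v ≠ w) {k : ℕ} (hk : G.LidColorable k) : 3 ≤ k := by
  have hw : w ∉ G.closedNbhd v := by
    rintro (h | h)
    · exact hvw h.symm
    · exact p.valid h ((p.eq_not_of_adj huv).trans (p.eq_not_of_adj huw).symm)
  exact three_le_of_lidColorable_of_closedNbhd_ne huv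
    (fun h => hw (h ▸ mem_closedNbhd_of_adj huw)) hk

section LidColoringOfBipartition

variable {p g : V → Bool} {v w : V}

def lidColoringOfBipartition (p g : V → Bool) (v : V) : Fin 3 :=
  if p v then 0 else if g v then 1 else 2

lemma lidColoringOfBipartition_eq_zero (hv : p v = true) : lidColoringOfBipartition p g v = 0 := by
  simp [lidColoringOfBipartition, hv]

lemma lidColoringOfBipartition_ne_zero (hv : p v = false) :
    lidColoringOfBipartition p g v ≠ 0 := by
  cases hg : g v <;> simp [lidColoringOfBipartition, hv, hg]

lemma lidColoringOfBipartition_ne (hv : p v = false) (hw : p w = false) (hg : g v ≠ g w) :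
    lidColoringOfBipartition p g v ≠ lidColoringOfBipartition p g w := by
  cases hgv : g v <;> cases hgw : g w <;> simp_all [lidColoringOfBipartition]

end LidColoringOfBipartition

variable {g : V → Bool}

lemma lidColoringOfBipartition_image_closedNbhd_ne (p : G.Coloring Bool)
    (hg : G.NonconstantOnNeighborSets g) {u w : V} (huw : G.Adj u w) (hu : p u = true) :
    lidColoringOfBipartition p g '' G.closedNbhd u ≠
      lidColoringOfBipartition p g '' G.closedNbhd w := by
  intro heq
  have hw : p w = false := by simpa [hu] using p.eq_not_of_adj huw
  obtain ⟨x, y, hx, hy, hxy⟩ := hg u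
  obtain ⟨v, huv, hvw⟩ : ∃ v, G.Adj u v ∧ g v ≠ g w := by
    by_cases h : g x = g w
    · exact ⟨y, hy, fun h' => hxy (h.trans h'.symm)⟩
    · exact ⟨x, hx, h⟩
  have hv : p v = false := by simpa [hu] using p.eq_not_of_adj huv
  obtain ⟨z, hz, hfz⟩ : lidColoringOfBipartition p g v ∈
      lidColoringOfBipartition p g '' G.closedNbhd w :=
    heq ▸ ⟨v, mem_closedNbhd_of_adj huv, rfl⟩
  rcases hz with rfl | hwz
  · exact lidColoringOfBipartition_ne hv hw hvw hfz.symm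
  · have hz : p z = true := by simpa [hw] using p.eq_not_of_adj hwz
    exact lidColoringOfBipartition_ne_zero hv (hfz ▸ lidColoringOfBipartition_eq_zero hz)

lemma isLidColoring_lidColoringOfBipartition (p : G.Coloring Bool)
    (hg : G.NonconstantOnNeighborSets g) : G.IsLidColoring (lidColoringOfBipartition p g) := by
  refine ⟨fun u w huw => ?_, fun u w huw _ => ?_⟩ <;> cases hu : p u
  · have hw : p w = true := by simpa [hu] using p.eq_not_of_adj huw
    rw [lidColoringOfBipartition_eq_zero hw]
    exact lidColoringOfBipartition_ne_zero hu
  · have hw : p w = false := by simpa [hu] using p.eq_not_of_adj huw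
    rw [lidColoringOfBipartition_eq_zero hu]
    exact (lidColoringOfBipartition_ne_zero hw).symm
  · have hw : p w = true := by simpa [hu] using p.eq_not_of_adj huw
    exact (lidColoringOfBipartition_image_closedNbhd_ne p hg huw.symm hw).symm
  · exact lidColoringOfBipartition_image_closedNbhd_ne p hg huw hu

theorem lidChromaticNumber_eq_three_of_bipartite [Nonempty V] (p : G.Coloring Bool)
    (hg : G.NonconstantOnNeighborSets g) : G.lidChromaticNumber = 3 := by
  refine lidChromaticNumber_eq_of_forall_le
    ⟨_, isLidColoring_lidColoringOfBipartition p hg⟩ fun k hk => ?_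
  obtain ⟨x, y, hx, hy, hxy⟩ := hg (Classical.arbitrary V)
  exact three_le_of_lidColorable_of_bipartite p hx hy (fun h => hxy (h ▸ rfl)) hk

section TensorProd

variable {α β : Type*} {G : SimpleGraph α} {H : SimpleGraph β}

def tensorProdFst : G.tensorProd H →g G := ⟨Prod.fst, And.left⟩

def tensorProdSnd : G.tensorProd H →g H := ⟨Prod.snd, And.right⟩

lemma NonconstantOnNeighborSets.tensorProd {ρ : α → Fin 3} {κ : β → Fin 3}
    (hρ : G.NonconstantOnNeighborSets ρ) (hκ : H.NonconstantOnNeighborSets κ) :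
    (G.tensorProd H).NonconstantOnNeighborSets fun v => decide (ρ v.1 = κ v.2) := by
  rintro ⟨a, b⟩
  obtain ⟨a₁, a₂, ha₁, ha₂, hρa⟩ := hρ a
  obtain ⟨b₁, b₂, hb₁, hb₂, hκb⟩ := hκ b
  have row : ∀ x, G.Adj a x → (ρ x = κ b₁ ∨ ρ x = κ b₂) →
      ∃ v w, (G.tensorProd H).Adj (a, b) v ∧ (G.tensorProd H).Adj (a, b) w ∧
        decide (ρ v.1 = κ v.2) ≠ decide (ρ w.1 = κ w.2) := by
    intro x hx h
    refine ⟨(x, b₁), (x, b₂), ⟨hx, hb₁⟩, ⟨hx, hb₂⟩, ?_⟩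
    rcases h with h | h <;> simp [h, hκb, hκb.symm]
  have pigeonhole : (ρ a₁ = κ b₁ ∨ ρ a₁ = κ b₂) ∨ (ρ a₂ = κ b₁ ∨ ρ a₂ = κ b₂) := by omega
  rcases pigeonhole with h | h
  · exact row a₁ ha₁ h
  · exact row a₂ ha₂ h

end TensorProd

/-- Blocks `0 0 1 1 …` make values two apart differ; the last two entries, whose partners wrap
around to the first block, get `2`, except for the triangle `n = 3`, which needs `0 1 2`. -/
def distTwoColoring (n : ℕ) (x : Fin n) : Fin 3 :=
  if x.val + 2 < n then ⟨x.val / 2 % 2, by omega⟩ else if n = 3 ∧ x.val = 1 then 1 else 2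

lemma distTwoColoring_sub_one_ne_add_one {k : ℕ} (x : Fin (k + 3)) :
    distTwoColoring (k + 3) (x - 1) ≠ distTwoColoring (k + 3) (x + 1) := by
  have hsucc := Fin.val_add_one x
  have hpred := Fin.coe_sub_one x
  simp only [Fin.ext_iff, Fin.val_last, Fin.val_zero] at hsucc hpred
  unfold distTwoColoring
  generalize (x - 1 : Fin (k + 3)) = y at *
  generalize (x + 1 : Fin (k + 3)) = z at *
  have hx := x.isLt
  split_ifs at hsucc hpred ⊢ <;> simp only [ne_eq, Fin.ext_iff, Fin.val_two, Fin.val_one] <;>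
    omega

lemma nonconstantOnNeighborSets_cycleGraph {n : ℕ} (hn : 3 ≤ n) :
    (cycleGraph n).NonconstantOnNeighborSets (distTwoColoring n) := by
  obtain ⟨k, rfl⟩ : ∃ k, n = k + 3 := ⟨n - 3, by omega⟩
  exact fun x => ⟨x - 1, x + 1, by simp [cycleGraph_adj], by simp [cycleGraph_adj],
    distTwoColoring_sub_one_ne_add_one x⟩

end SimpleGraph

/-- For `3 ≤ m ≤ n` with at least one of `m`, `n` even, `χ_lid(C_m × C_n) = 3`. -/
theorem lid_stmt_17 (m n : ℕ) (hm : 3 ≤ m) (hmn : m ≤ n) (heven : Even m ∨ Even n) :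
    ((cycleGraph m).tensorProd (cycleGraph n)).lidChromaticNumber = 3 := by
  have hn : 3 ≤ n := hm.trans hmn
  have : Nonempty (Fin m × Fin n) := ⟨(⟨0, by omega⟩, ⟨0, by omega⟩)⟩
  obtain ⟨p⟩ : Nonempty (((cycleGraph m).tensorProd (cycleGraph n)).Coloring Bool) :=
    heven.elim (fun h => ⟨(cycleGraph.bicoloring_of_even m h).comp tensorProdFst⟩)
      (fun h => ⟨(cycleGraph.bicoloring_of_even n h).comp tensorProdSnd⟩)
  exact lidChromaticNumber_eq_three_of_bipartite p
    ((nonconstantOnNeighborSets_cycleGraph hm).tensorProd (nonconstantOnNeighborSets_cycleGraph hn))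
end
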